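/- Well-separation implies the safety zone is all of S₀: under the hypotheses of Proposition 3.6 with a(x) ≥ a₀ > 0 for all x ∈ S₀, if η^q > (m/(m−ε))·((b/(b+q))·(m/(a₀(1−ε)))^{q/b} + h), then for every x ∈ S₀ and every y ∈ S₁, d_{P,m,q}(x)^q + h < d_{P,m,q}(y)^q. -/
import Mathlib


open MeasureTheory Metric Set

noncomputable def rad {d : ℕ} (P : Measure (EuclideanSpace ℝ (Fin d))) (p : ℝ)
    (x : EuclideanSpace ℝ (Fin d)) : ℝ :=
  sInf {r : ℝ | 0 < r ∧ p ≤ (P (closedBall x r)).toReal}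

namespace Stmt17Aux

variable {d : ℕ}

lemma rad_nonneg (P : Measure (EuclideanSpace ℝ (Fin d))) (t : ℝ)
    (z : EuclideanSpace ℝ (Fin d)) : 0 ≤ rad P t z :=
  Real.sInf_nonneg fun _ hr => hr.1.le

lemma rad_le (P : Measure (EuclideanSpace ℝ (Fin d))) {t R : ℝ}
    {z : EuclideanSpace ℝ (Fin d)} (hR : 0 < R)
    (ht : t ≤ (P (closedBall z R)).toReal) : rad P t z ≤ R :=
  csInf_le ⟨0, fun _ hr => hr.1.le⟩ ⟨hR, ht⟩

lemma rad_set_nonempty (P : Measure (EuclideanSpace ℝ (Fin d))) [IsProbabilityMeasure P]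
    {t : ℝ} (ht : t < 1) (z : EuclideanSpace ℝ (Fin d)) :
    {r : ℝ | 0 < r ∧ t ≤ (P (closedBall z r)).toReal}.Nonempty := by
  have hmono : Monotone (fun n : ℕ => closedBall z n) := fun a b hab =>
    closedBall_subset_closedBall (by exact_mod_cast hab)
  have hunion : (⋃ n : ℕ, closedBall z n) = Set.univ := by
    ext w
    simp only [Set.mem_iUnion, mem_closedBall, Set.mem_univ, iff_true]
    obtain ⟨n, hn⟩ := exists_nat_ge (dist w z)
    exact ⟨n, hn⟩
  have htend := tendsto_measure_iUnion_atTop (μ := P) hmono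
  rw [hunion, measure_univ] at htend
  have hev : ∀ᶠ n : ℕ in Filter.atTop, ENNReal.ofReal t < P (closedBall z n) :=
    htend.eventually_const_lt (ENNReal.ofReal_lt_one.2 ht)
  obtain ⟨n, hn⟩ := hev.exists
  refine ⟨(n : ℝ) + 1, by positivity, ?_⟩
  have hle : ENNReal.ofReal t ≤ P (closedBall z ((n : ℝ) + 1)) :=
    hn.le.trans (measure_mono (closedBall_subset_closedBall (by linarith)))
  exact (ENNReal.ofReal_le_iff_le_toReal (measure_ne_top P _)).1 hle

lemma le_rad (P : Measure (EuclideanSpace ℝ (Fin d))) [IsProbabilityMeasure P]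
    {t η : ℝ} (ht : t < 1) {z : EuclideanSpace ℝ (Fin d)}
    (hlb : ∀ r, 0 < r → t ≤ (P (closedBall z r)).toReal → η ≤ r) :
    η ≤ rad P t z :=
  le_csInf (rad_set_nonempty P ht z) fun r hr => hlb r hr.1 hr.2

lemma rad_monoOn (P : Measure (EuclideanSpace ℝ (Fin d))) [IsProbabilityMeasure P]
    {m : ℝ} (hm : m < 1) (z : EuclideanSpace ℝ (Fin d)) :
    MonotoneOn (fun t => rad P t z) (Set.Icc 0 m) := by
  intro t₁ _ t₂ h₂ h12
  refine csInf_le_csInf ⟨0, fun _ hr => hr.1.le⟩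
    (rad_set_nonempty P (lt_of_le_of_lt h₂.2 hm) z) ?_
  intro r hr
  exact ⟨hr.1, h12.trans hr.2⟩

end Stmt17Aux

open Stmt17Aux

theorem stmt17 {d : ℕ} (P₀ P₁ : Measure (EuclideanSpace ℝ (Fin d)))
    [IsProbabilityMeasure P₀] [IsProbabilityMeasure P₁]
    (S₀ S₁ : Set (EuclideanSpace ℝ (Fin d)))
    (hS₀ : P₀ S₀ᶜ = 0) (hS₁ : P₁ S₁ᶜ = 0)
    (ε η m q b h a₀ : ℝ) (hε : ε ∈ Set.Ico (0:ℝ) 1) (hη : 0 < η)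
    (hsep : ∀ x' ∈ S₀, ∀ z ∈ S₁, η ≤ dist x' z)
    (hm : m ∈ Set.Ioo ε 1) (hmε : m ≤ 1 - ε) (hq : 1 ≤ q) (hb : 0 < b) (hh : 0 < h)
    (ha₀ : 0 < a₀)
    (hab : ∀ x ∈ S₀, ∀ r : ℝ, 0 < r → min 1 (a₀ * r ^ b) ≤ (P₀ (closedBall x r)).toReal)
    (hwell : (m / (m - ε)) * ((b / (b + q)) * (m / (a₀ * (1 - ε))) ^ (q / b) + h)
        < η ^ q) :
    ∀ x ∈ S₀, ∀ y ∈ S₁,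
      (1 / m) * (∫ t in (0:ℝ)..m,
          rad (ENNReal.ofReal (1 - ε) • P₀ + ENNReal.ofReal ε • P₁) t x ^ q) + h
        < (1 / m) * ∫ t in (0:ℝ)..m,
            rad (ENNReal.ofReal (1 - ε) • P₀ + ENNReal.ofReal ε • P₁) t y ^ q := by
  intro x hx y hy
  obtain ⟨hε0, hε1⟩ := hε
  obtain ⟨hεm, hm1⟩ := hm
  have hm0 : 0 < m := lt_of_le_of_lt hε0 hεm
  have h1ε : (0:ℝ) < 1 - ε := by linarith
  have hq0 : (0:ℝ) < q := lt_of_lt_of_le one_pos hq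
  set C : ℝ := a₀ * (1 - ε) with hC
  have hC0 : 0 < C := mul_pos ha₀ h1ε
  set P : Measure (EuclideanSpace ℝ (Fin d)) :=
    ENNReal.ofReal (1 - ε) • P₀ + ENNReal.ofReal ε • P₁ with hP
  have hPprob : IsProbabilityMeasure P := by
    constructor
    rw [hP]
    simp only [Measure.add_apply, Measure.smul_apply, smul_eq_mul, measure_univ, mul_one]
    rw [← ENNReal.ofReal_add h1ε.le hε0]
    norm_num
  have hPtoReal : ∀ s, (P s).toReal = (1 - ε) * (P₀ s).toReal + ε * (P₁ s).toReal := by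
    intro s
    rw [hP]
    simp only [Measure.add_apply, Measure.smul_apply, smul_eq_mul]
    rw [ENNReal.toReal_add (ENNReal.mul_ne_top ENNReal.ofReal_ne_top (measure_ne_top _ _))
      (ENNReal.mul_ne_top ENNReal.ofReal_ne_top (measure_ne_top _ _)),
      ENNReal.toReal_mul, ENNReal.toReal_mul, ENNReal.toReal_ofReal h1ε.le,
      ENNReal.toReal_ofReal hε0]
  -- upper bound for rad at x
  have hrad_x : ∀ t ∈ Set.Icc (0:ℝ) m, rad P t x ≤ (t / C) ^ b⁻¹ := by
    rintro t ⟨ht0, htm⟩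
    rcases eq_or_lt_of_le ht0 with rfl | ht0'
    · have hle0 : rad P 0 x ≤ (0:ℝ) := by
        have hle : ∀ s : ℝ, 0 < s → rad P 0 x ≤ s := fun s hs =>
          rad_le P hs ENNReal.toReal_nonneg
        by_contra hc
        push_neg at hc
        have := hle (rad P 0 x / 2) (by linarith)
        linarith
      exact hle0.trans (Real.rpow_nonneg (by positivity) _)
    · set R : ℝ := (t / C) ^ b⁻¹ with hR
      have hR0 : 0 < R := Real.rpow_pos_of_pos (by positivity) _
      refine rad_le P hR0 ?_
      have hRb : a₀ * R ^ b = t / (1 - ε) := by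
        rw [hR, Real.rpow_inv_rpow (by positivity) hb.ne', hC]
        field_simp
      have hmin : min 1 (a₀ * R ^ b) = t / (1 - ε) := by
        rw [hRb, min_eq_right ((div_le_one h1ε).2 (by linarith))]
      have h₀ : t ≤ (1 - ε) * (P₀ (closedBall x R)).toReal := by
        have hmm := hab x hx R hR0
        rw [hmin] at hmm
        calc t = (1 - ε) * (t / (1 - ε)) := by field_simp
        _ ≤ (1 - ε) * (P₀ (closedBall x R)).toReal :=
          mul_le_mul_of_nonneg_left hmm h1ε.le
      rw [hPtoReal]
      have hnn : 0 ≤ ε * (P₁ (closedBall x R)).toReal :=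
        mul_nonneg hε0 ENNReal.toReal_nonneg
      linarith
  -- lower bound for rad at y
  have hrad_y : ∀ t ∈ Set.Ioc ε m, η ≤ rad P t y := by
    rintro t ⟨htε, htm⟩
    refine le_rad P (lt_of_le_of_lt htm hm1) ?_
    intro r hr0 hrle
    by_contra hc
    push_neg at hc
    have hP₀0 : P₀ (closedBall y r) = 0 := by
      refine measure_mono_null ?_ hS₀
      intro w hw hwS₀
      have h1 := hsep w hwS₀ y hy
      have h2 : dist w y ≤ r := mem_closedBall.1 hw
      linarith
    rw [hPtoReal, hP₀0] at hrle
    simp only [ENNReal.toReal_zero, mul_zero, zero_add] at hrle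
    have hP₁le : (P₁ (closedBall y r)).toReal ≤ 1 := by
      rw [← ENNReal.toReal_one]
      exact ENNReal.toReal_mono ENNReal.one_ne_top prob_le_one
    nlinarith
  -- monotonicity / integrability
  have hmonor_x : MonotoneOn (fun t => rad P t x ^ q) (Set.Icc 0 m) := by
    intro t₁ h₁ t₂ h₂ h12
    exact Real.rpow_le_rpow (rad_nonneg P t₁ x) (rad_monoOn P hm1 x h₁ h₂ h12) hq0.le
  have hmonor_y : MonotoneOn (fun t => rad P t y ^ q) (Set.Icc 0 m) := by
    intro t₁ h₁ t₂ h₂ h12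
    exact Real.rpow_le_rpow (rad_nonneg P t₁ y) (rad_monoOn P hm1 y h₁ h₂ h12) hq0.le
  have hInt_x : IntervalIntegrable (fun t => rad P t x ^ q) volume 0 m := by
    apply MonotoneOn.intervalIntegrable
    rwa [Set.uIcc_of_le hm0.le]
  have hInt_y1 : IntervalIntegrable (fun t => rad P t y ^ q) volume 0 ε := by
    apply MonotoneOn.intervalIntegrable
    rw [Set.uIcc_of_le hε0]
    exact hmonor_y.mono (Set.Icc_subset_Icc le_rfl hεm.le)
  have hInt_y2 : IntervalIntegrable (fun t => rad P t y ^ q) volume ε m := by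
    apply MonotoneOn.intervalIntegrable
    rw [Set.uIcc_of_le hεm.le]
    exact hmonor_y.mono (Set.Icc_subset_Icc hε0 le_rfl)
  have hmonog : MonotoneOn (fun t : ℝ => (t / C) ^ (q / b)) (Set.Icc 0 m) := by
    intro t₁ h₁ t₂ _ h12
    exact Real.rpow_le_rpow (div_nonneg h₁.1 hC0.le) (by gcongr) (by positivity)
  have hIntg : IntervalIntegrable (fun t : ℝ => (t / C) ^ (q / b)) volume 0 m := by
    apply MonotoneOn.intervalIntegrable
    rwa [Set.uIcc_of_le hm0.le]
  -- compare ∫ rad^q at x with ∫ (t/C)^(q/b)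
  have hle_x : (∫ t in (0:ℝ)..m, rad P t x ^ q) ≤ ∫ t in (0:ℝ)..m, (t / C) ^ (q / b) := by
    refine intervalIntegral.integral_mono_on hm0.le hInt_x hIntg ?_
    intro t ht
    have h1 : rad P t x ≤ (t / C) ^ b⁻¹ := hrad_x t ht
    calc rad P t x ^ q ≤ ((t / C) ^ b⁻¹) ^ q :=
      Real.rpow_le_rpow (rad_nonneg P t x) h1 hq0.le
    _ = (t / C) ^ (q / b) := by
      rw [← Real.rpow_mul (div_nonneg ht.1 hC0.le)]
      congr 1
      field_simp
  have hg_eval : (∫ t in (0:ℝ)..m, (t / C) ^ (q / b))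
      = (m ^ (q / b + 1) / (q / b + 1)) / C ^ (q / b) := by
    have hcongr : (∫ t in (0:ℝ)..m, (t / C) ^ (q / b))
        = ∫ t in (0:ℝ)..m, t ^ (q / b) / C ^ (q / b) := by
      refine intervalIntegral.integral_congr ?_
      intro t ht
      rw [Set.uIcc_of_le hm0.le] at ht
      exact Real.div_rpow ht.1 hC0.le _
    have hexp : (0:ℝ) < q / b + 1 := by
      have := div_pos hq0 hb
      linarith
    have hexp' : (-1:ℝ) < q / b := by linarith
    rw [hcongr, intervalIntegral.integral_div, integral_rpow (Or.inl hexp'),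
      Real.zero_rpow hexp.ne']
    ring
  -- lower bound for the integral at y
  have hge_y : (m - ε) * η ^ q ≤ ∫ t in (0:ℝ)..m, rad P t y ^ q := by
    have hsplit : (∫ t in (0:ℝ)..ε, rad P t y ^ q) + (∫ t in ε..m, rad P t y ^ q)
        = ∫ t in (0:ℝ)..m, rad P t y ^ q :=
      intervalIntegral.integral_add_adjacent_intervals hInt_y1 hInt_y2
    have h1 : 0 ≤ ∫ t in (0:ℝ)..ε, rad P t y ^ q :=
      intervalIntegral.integral_nonneg hε0 fun t _ => Real.rpow_nonneg (rad_nonneg P t y) q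
    have h2 : (m - ε) * η ^ q ≤ ∫ t in ε..m, rad P t y ^ q := by
      have hconst : (∫ _ in ε..m, η ^ q) = (m - ε) * η ^ q := by
        simp [intervalIntegral.integral_const, smul_eq_mul]
      rw [← hconst]
      refine intervalIntegral.integral_mono_ae_restrict hεm.le
        intervalIntegrable_const hInt_y2 ?_
      rw [Filter.EventuallyLE, ae_restrict_iff' measurableSet_Icc]
      have hne : ∀ᵐ t : ℝ ∂volume, t ≠ ε := by
        rw [MeasureTheory.ae_iff]
        simp only [not_not, Set.setOf_eq_eq_singleton]
        exact measure_singleton ε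
      filter_upwards [hne] with t ht htIcc
      have hmem : t ∈ Set.Ioc ε m := ⟨lt_of_le_of_ne htIcc.1 (Ne.symm ht), htIcc.2⟩
      exact Real.rpow_le_rpow hη.le (hrad_y t hmem) hq0.le
    linarith
  -- final arithmetic
  set A : ℝ := (b / (b + q)) * (m / C) ^ (q / b) with hA
  have hAeq : (1 / m) * ((m ^ (q / b + 1) / (q / b + 1)) / C ^ (q / b)) = A := by
    rw [hA, Real.rpow_add_one hm0.ne', Real.div_rpow hm0.le hC0.le]
    have h1 : C ^ (q / b) ≠ 0 := (Real.rpow_pos_of_pos hC0 _).ne'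
    have h2 : q / b + 1 ≠ 0 := by
      have := div_pos hq0 hb
      linarith
    field_simp
    ring
  have hmε0 : 0 < m - ε := by linarith
  have hmain : A + h < ((m - ε) / m) * η ^ q := by
    have hmul := mul_lt_mul_of_pos_left hwell (div_pos hmε0 hm0)
    calc A + h = ((m - ε) / m) * ((m / (m - ε)) * (A + h)) := by
          field_simp
        _ < ((m - ε) / m) * η ^ q := hmul
  have hx_final : (1 / m) * (∫ t in (0:ℝ)..m, rad P t x ^ q) ≤ A := by
    calc (1 / m) * (∫ t in (0:ℝ)..m, rad P t x ^ q)
        ≤ (1 / m) * ∫ t in (0:ℝ)..m, (t / C) ^ (q / b) :=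
          mul_le_mul_of_nonneg_left hle_x (by positivity)
      _ = A := by rw [hg_eval, hAeq]
  have hy_final : ((m - ε) / m) * η ^ q ≤ (1 / m) * ∫ t in (0:ℝ)..m, rad P t y ^ q := by
    calc ((m - ε) / m) * η ^ q = (1 / m) * ((m - ε) * η ^ q) := by ring
      _ ≤ (1 / m) * ∫ t in (0:ℝ)..m, rad P t y ^ q :=
          mul_le_mul_of_nonneg_left hge_y (by positivity)
  linarith
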